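/- arXiv:1708.05118 — 7 statements merged into one kernel-verified Lean document; each statement's English description precedes it below -/
import Mathlib

section
/- Let H be a connected constraint graph (possibly with self-loops) on q vertices that is not the complete graph with all self-loops. Then H is identifiable (i.e., any two distinct H-colorable graphs G1, G2 on the same vertex set have different sets of H-colorings) if and only if for every H-colorable graph G = (V,E) and every pair of nonadjacent vertices u, v in V there exists an H-coloring sigma of G such that {sigma(u), sigma(v)} is not an edge of H. -/
/-- An `H`-coloring of a graph `G` is a map to the colors `Fin q` such that
adjacent vertices of `G` receive `H`-adjacent colors. -/
def IsHColoring {q : ℕ} (H : Fin q → Fin q → Prop) {V : Type} (G : SimpleGraph V)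
    (σ : V → Fin q) : Prop :=
  ∀ u v : V, G.Adj u v → H (σ u) (σ v)

/-!
If every `H`-coloring of `G` gives the nonadjacent vertices `u, v` adjacent colors, then `G`
and `G ⊔ edge u v` are distinct graphs with the same `H`-colorings, so `H` is not
identifiable. Conversely, if `G₁` and `G₂` have the same colorings and `u, v` are adjacent in
`G₁` but not in `G₂`, a coloring of `G₂` separating `u` from `v` is not a coloring of `G₁`.
-/

open SimpleGraph

variable {q : ℕ} {H : Fin q → Fin q → Prop} {V : Type}

theorem IsHColoring.anti {G G' : SimpleGraph V} (hle : G ≤ G') {σ : V → Fin q}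
    (hσ : IsHColoring H G' σ) : IsHColoring H G σ :=
  fun u v huv => hσ u v (hle huv)

theorem isHColoring_sup_iff {G G' : SimpleGraph V} {σ : V → Fin q} :
    IsHColoring H (G ⊔ G') σ ↔ IsHColoring H G σ ∧ IsHColoring H G' σ :=
  ⟨fun hσ => ⟨hσ.anti le_sup_left, hσ.anti le_sup_right⟩,
    fun ⟨hσ, hσ'⟩ u v huv => huv.elim (hσ u v) (hσ' u v)⟩

theorem isHColoring_edge_iff (hsymm : Symmetric H) {u v : V} (huv : u ≠ v) {σ : V → Fin q} :
    IsHColoring H (edge u v) σ ↔ H (σ u) (σ v) := by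
  refine ⟨fun hσ => hσ u v ((edge_adj ..).mpr ⟨Or.inl ⟨rfl, rfl⟩, huv⟩), fun h a b hab => ?_⟩
  obtain ⟨⟨rfl, rfl⟩ | ⟨rfl, rfl⟩, -⟩ := (edge_adj ..).mp hab
  exacts [h, hsymm h]

theorem exists_isHColoring_not_adj_of_identifiable (hsymm : Symmetric H)
    (hid : ∀ G₁ G₂ : SimpleGraph V, (∃ σ, IsHColoring H G₁ σ) → (∃ σ, IsHColoring H G₂ σ) →
      {σ | IsHColoring H G₁ σ} = {σ | IsHColoring H G₂ σ} → G₁ = G₂)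
    {G : SimpleGraph V} (hcol : ∃ σ, IsHColoring H G σ) {u v : V} (huv : u ≠ v)
    (hadj : ¬ G.Adj u v) : ∃ σ, IsHColoring H G σ ∧ ¬ H (σ u) (σ v) := by
  by_contra! hsep
  have hcolorings : ∀ σ, IsHColoring H (G ⊔ edge u v) σ ↔ IsHColoring H G σ := fun σ => by
    rw [isHColoring_sup_iff, isHColoring_edge_iff hsymm huv]
    exact ⟨And.left, fun hσ => ⟨hσ, hsep σ hσ⟩⟩
  obtain ⟨σ, hσ⟩ := hcol
  refine (lt_sup_edge G u v huv hadj).ne (hid _ _ ⟨σ, hσ⟩ ⟨σ, (hcolorings σ).mpr hσ⟩ ?_)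
  exact Set.ext fun σ => (hcolorings σ).symm

theorem le_of_isHColoring_imp {G₁ G₂ : SimpleGraph V}
    (hsep : ∀ u v : V, u ≠ v → ¬ G₂.Adj u v → ∃ σ, IsHColoring H G₂ σ ∧ ¬ H (σ u) (σ v))
    (himp : ∀ σ, IsHColoring H G₂ σ → IsHColoring H G₁ σ) :
    G₁ ≤ G₂ := by
  intro u v h₁
  by_contra h₂
  obtain ⟨σ, hσ, hσuv⟩ := hsep u v h₁.ne h₂
  exact hσuv (himp σ hσ u v h₁)

theorem stmt0_general (q : ℕ) (H : Fin q → Fin q → Prop)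
    (hsymm : Symmetric H) :
    (∀ (V : Type) [Fintype V] (G₁ G₂ : SimpleGraph V),
        (∃ σ, IsHColoring H G₁ σ) → (∃ σ, IsHColoring H G₂ σ) →
        {σ | IsHColoring H G₁ σ} = {σ | IsHColoring H G₂ σ} → G₁ = G₂)
    ↔
    (∀ (V : Type) [Fintype V] (G : SimpleGraph V),
        (∃ σ, IsHColoring H G σ) →
        ∀ u v : V, u ≠ v → ¬ G.Adj u v →
          ∃ σ, IsHColoring H G σ ∧ ¬ H (σ u) (σ v)) := by
  constructor
  · intro hid V _ G hcol u v huv hadj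
    exact exists_isHColoring_not_adj_of_identifiable hsymm (hid V) hcol huv hadj
  · intro hsep V _ G₁ G₂ hcol₁ hcol₂ hset
    exact le_antisymm
      (le_of_isHColoring_imp (hsep V G₂ hcol₂) fun σ => (Set.ext_iff.mp hset σ).mpr)
      (le_of_isHColoring_imp (hsep V G₁ hcol₁) fun σ => (Set.ext_iff.mp hset σ).mp)

/-- A connected constraint graph `H` (possibly with self-loops) which is not the complete
looped graph is identifiable iff for every `H`-colorable graph `G` and every pair of
nonadjacent vertices `u, v` there is an `H`-coloring of `G` giving `u, v` incompatible colors. -/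
theorem stmt0 (q : ℕ) (H : Fin q → Fin q → Prop)
    (hsymm : Symmetric H)
    (hconn : ∀ i j : Fin q, Relation.ReflTransGen H i j)
    (hne : ∃ i j : Fin q, ¬ H i j) :
    (∀ (V : Type) [Fintype V] (G₁ G₂ : SimpleGraph V),
        (∃ σ, IsHColoring H G₁ σ) → (∃ σ, IsHColoring H G₂ σ) →
        {σ | IsHColoring H G₁ σ} = {σ | IsHColoring H G₂ σ} → G₁ = G₂)
    ↔
    (∀ (V : Type) [Fintype V] (G : SimpleGraph V),
        (∃ σ, IsHColoring H G σ) →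
        ∀ u v : V, u ≠ v → ¬ G.Adj u v →
          ∃ σ, IsHColoring H G σ ∧ ¬ H (σ u) (σ v)) :=
  stmt0_general q H hsymm
end

section
/- Suppose that for every edge {i,j} of a loopless connected constraint graph H there exists an H-coloring tau of the supergraph G_{ij} in which the duplicate vertices i' and j' receive incompatible colors. Then for every H-colorable graph G and every H-coloring sigma of G and every pair of nonadjacent vertices u, v of G with a = sigma(u), b = sigma(v) compatible, the map sigma' defined by sigma'(w) = tau(sigma(w)) for w not in {u,v}, sigma'(u) = tau(a'), sigma'(v) = tau(b') (where tau is an H-coloring of G_{ab} with tau(a'), tau(b') incompatible) is a valid H-coloring of G in which u and v receive incompatible colors. -/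
/-- Adjacency of the supergraph `G_{ij}` of `H`: vertices are the colors of `H` together
with duplicates `i' = inr false` and `j' = inr true` of `i` and `j`; the duplicates have
the same neighborhoods as the originals except that the edge `{i', j'}` is absent. -/
def GijAdj {q : ℕ} (H : Fin q → Fin q → Prop) (i j : Fin q) :
    (Fin q ⊕ Bool) → (Fin q ⊕ Bool) → Prop
  | Sum.inl a, Sum.inl b => H a b
  | Sum.inl a, Sum.inr c => H (if c then j else i) a
  | Sum.inr c, Sum.inl a => H (if c then j else i) a
  | Sum.inr _, Sum.inr _ => False

section Recoloring

variable {q : ℕ} {H : Fin q → Fin q → Prop} {V : Type} [DecidableEq V] {G : SimpleGraph V}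

def toGij (σ : V → Fin q) (u v w : V) : Fin q ⊕ Bool :=
  if w = u then Sum.inr false else if w = v then Sum.inr true else Sum.inl (σ w)

theorem toGij_left (σ : V → Fin q) (u v : V) : toGij σ u v u = Sum.inr false := by
  simp [toGij]

theorem toGij_right (σ : V → Fin q) {u v : V} (huv : u ≠ v) :
    toGij σ u v v = Sum.inr true := by
  simp [toGij, huv.symm]

/-- The only edge missing from `G_{σ u, σ v}`, between `(σ u)'` and `(σ v)'`, would be needed
only for an edge `uv` of `G`. -/
theorem gijAdj_toGij {σ : V → Fin q} (hσ : IsHColoring H G σ) {u v : V}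
    (hnadj : ¬ G.Adj u v) {x y : V} (hxy : G.Adj x y) :
    GijAdj H (σ u) (σ v) (toGij σ u v x) (toGij σ u v y) := by
  have hne : x ≠ y := hxy.ne
  unfold toGij
  split_ifs <;> subst_vars
  all_goals first
    | exact (hne rfl).elim
    | exact (hnadj hxy).elim
    | exact (hnadj hxy.symm).elim
    | exact hσ _ _ hxy
    | exact hσ _ _ hxy.symm

end Recoloring

theorem stmt3_general (q : ℕ) (H : Fin q → Fin q → Prop)
    (V : Type) [DecidableEq V] (G : SimpleGraph V) (σ : V → Fin q)
    (hσ : IsHColoring H G σ)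
    (u v : V) (huv : u ≠ v) (hnadj : ¬ G.Adj u v)
    (τ : (Fin q ⊕ Bool) → Fin q)
    (hτ : ∀ a b, GijAdj H (σ u) (σ v) a b → H (τ a) (τ b))
    (hτinc : ¬ H (τ (Sum.inr false)) (τ (Sum.inr true))) :
    IsHColoring H G (fun w =>
      if w = u then τ (Sum.inr false)
      else if w = v then τ (Sum.inr true)
      else τ (Sum.inl (σ w))) ∧
    ¬ H ((fun w : V =>
      if w = u then τ (Sum.inr false)
      else if w = v then τ (Sum.inr true)
      else τ (Sum.inl (σ w))) u)
        ((fun w : V =>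
      if w = u then τ (Sum.inr false)
      else if w = v then τ (Sum.inr true)
      else τ (Sum.inl (σ w))) v) := by
  have hrecolor : (fun w => if w = u then τ (Sum.inr false)
      else if w = v then τ (Sum.inr true) else τ (Sum.inl (σ w))) = τ ∘ toGij σ u v := by
    funext w
    simp only [Function.comp_apply, toGij]
    split_ifs <;> rfl
  rw [hrecolor]
  refine ⟨fun x y hxy => hτ _ _ (gijAdj_toGij hσ hnadj hxy), ?_⟩
  simpa only [Function.comp_apply, toGij_left, toGij_right σ huv] using hτinc

/-- If for every edge `{i,j}` of the loopless connected constraint graph `H` there is an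
`H`-coloring of `G_{ij}` giving `i', j'` incompatible colors, then for any `H`-coloring `σ`
of a graph `G` and nonadjacent `u, v` with compatible colors `a = σ u`, `b = σ v`,
recoloring through any such coloring `τ` of `G_{ab}` yields a valid `H`-coloring of `G`
in which `u` and `v` receive incompatible colors. -/
theorem stmt3 (q : ℕ) (H : Fin q → Fin q → Prop)
    (hsymm : Symmetric H) (hloopless : ∀ a : Fin q, ¬ H a a)
    (hconn : ∀ a b : Fin q, Relation.ReflTransGen H a b)
    (hdup : ∀ i j : Fin q, H i j →
      ∃ τ : (Fin q ⊕ Bool) → Fin q,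
        (∀ a b, GijAdj H i j a b → H (τ a) (τ b)) ∧
        ¬ H (τ (Sum.inr false)) (τ (Sum.inr true)))
    (V : Type) [DecidableEq V] (G : SimpleGraph V) (σ : V → Fin q)
    (hσ : IsHColoring H G σ)
    (u v : V) (huv : u ≠ v) (hnadj : ¬ G.Adj u v)
    (hab : H (σ u) (σ v))
    (τ : (Fin q ⊕ Bool) → Fin q)
    (hτ : ∀ a b, GijAdj H (σ u) (σ v) a b → H (τ a) (τ b))
    (hτinc : ¬ H (τ (Sum.inr false)) (τ (Sum.inr true))) :
    IsHColoring H G (fun w =>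
      if w = u then τ (Sum.inr false)
      else if w = v then τ (Sum.inr true)
      else τ (Sum.inl (σ w))) ∧
    ¬ H ((fun w : V =>
      if w = u then τ (Sum.inr false)
      else if w = v then τ (Sum.inr true)
      else τ (Sum.inl (σ w))) u)
        ((fun w : V =>
      if w = u then τ (Sum.inr false)
      else if w = v then τ (Sum.inr true)
      else τ (Sum.inl (σ w))) v) :=
  stmt3_general q H V G σ hσ u v huv hnadj τ hτ hτinc
end

section
/- Let H be a fixed constraint graph and G_hat_1, ..., G_hat_r distinct H-colorable graphs on the same vertex set such that G_hat_1 is a subgraph of every G_hat_i and G_hat_r is a supergraph of every G_hat_i, and H is identifiable with respect to this family. Let eta = 1 - |Omega(G_hat_r)| / |Omega(G_hat_1)|, where Omega(G) denotes the set of H-colorings of G. If an algorithm, given L i.i.d. samples from the uniform distribution over Omega(G*) for any G* in the family, outputs G* with probability at least 1/r + alpha for some alpha > 0, then L >= alpha / eta. -/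
/-!
Every `H`-coloring of the largest graph `G_r` is an `H`-coloring of each `G_i`, so each sample
distribution `π_i^L` agrees with the uniform distribution on `Ω(G_r)^L` up to an error of at most
`1 - (|Ω(G_r)| / |Ω(G_1)|)^L`. On `Ω(G_r)^L` the success probabilities of the `r` hypotheses sum
to one, so if each is at least `1/r + α` then `α ≤ 1 - (1 - η)^L ≤ L η` by Bernoulli's inequality.
-/

open scoped Classical

open Finset Fintype

theorem IsHColoring.mono {q : ℕ} {H : Fin q → Fin q → Prop} {V : Type} {G G' : SimpleGraph V}
    {σ : V → Fin q} (hGG' : G ≤ G') (hσ : IsHColoring H G' σ) : IsHColoring H G σ :=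
  fun u v h ↦ hσ u v (hGG' h)

section Averaging

variable {β : Type*}

theorem inv_card_mul_sum_le_of_subset [DecidableEq β] {S T : Finset β} (hST : S ⊆ T)
    (hS : S.Nonempty) {f : β → ℝ} (hf0 : ∀ x ∈ T, 0 ≤ f x) (hf1 : ∀ x ∈ T, f x ≤ 1) :
    (#T : ℝ)⁻¹ * ∑ x ∈ T, f x ≤ (#S : ℝ)⁻¹ * ∑ x ∈ S, f x + (1 - #S / #T) := by
  have hST_card : (#S : ℝ) ≤ #T := by exact_mod_cast card_le_card hST
  have hS_pos : (0 : ℝ) < #S := by exact_mod_cast hS.card_pos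
  have hT_pos : (0 : ℝ) < #T := hS_pos.trans_le hST_card
  have hsdiff : ∑ x ∈ T \ S, f x ≤ #T - #S :=
    calc ∑ x ∈ T \ S, f x ≤ ∑ x ∈ T \ S, (1 : ℝ) :=
          sum_le_sum fun x hx ↦ hf1 x (mem_sdiff.1 hx).1
      _ = #T - #S := by
          rw [sum_const, card_sdiff_of_subset hST, nsmul_one, Nat.cast_sub (card_le_card hST)]
  calc (#T : ℝ)⁻¹ * ∑ x ∈ T, f x
      = (#T : ℝ)⁻¹ * ∑ x ∈ S, f x + (#T : ℝ)⁻¹ * ∑ x ∈ T \ S, f x := by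
        rw [← sum_sdiff hST, add_comm, mul_add]
    _ ≤ (#S : ℝ)⁻¹ * ∑ x ∈ S, f x + (#T : ℝ)⁻¹ * (#T - #S) := by
        gcongr
        exact sum_nonneg fun x hx ↦ hf0 x (hST hx)
    _ = (#S : ℝ)⁻¹ * ∑ x ∈ S, f x + (1 - #S / #T) := by
        field_simp

theorem sum_inv_card_mul_sum_eq_one {ι : Type*} [Fintype ι] {S : Finset β} (hS : S.Nonempty)
    {A : β → ι → ℝ} (hA : ∀ x, ∑ i, A x i = 1) :
    ∑ i, (#S : ℝ)⁻¹ * ∑ x ∈ S, A x i = 1 := by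
  rw [← mul_sum, sum_comm]
  simp [hA, hS.card_pos.ne']

end Averaging

theorem one_sub_pow_le_mul_one_sub {ρ : ℝ} (hρ : 0 ≤ ρ) (n : ℕ) : 1 - ρ ^ n ≤ n * (1 - ρ) := by
  have := one_add_mul_le_pow (a := ρ - 1) (by linarith) n
  simp only [add_sub_cancel] at this
  linarith

theorem le_one_sub_pow_of_forall_success {β ι : Type*} [Fintype ι] {L : ℕ}
    (Ω : ι → Finset β) (lo hi : ι) (hΩ : ∀ i, Ω hi ⊆ Ω i ∧ Ω i ⊆ Ω lo) (hne : (Ω hi).Nonempty)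
    (A : (Fin L → β) → ι → ℝ) (hA0 : ∀ x i, 0 ≤ A x i) (hA1 : ∀ x, ∑ i, A x i = 1) {α : ℝ}
    (hsucc : ∀ i, 1 / card ι + α ≤
      ((#(Ω i) : ℝ) ^ L)⁻¹ * ∑ x ∈ piFinset (fun _ ↦ Ω i), A x i) :
    α ≤ 1 - ((#(Ω hi) : ℝ) / #(Ω lo)) ^ L := by
  set P : ι → Finset (Fin L → β) := fun i ↦ piFinset fun _ ↦ Ω i
  set ρ : ℝ := #(Ω hi) / #(Ω lo)
  have hP_ne : (P hi).Nonempty := piFinset_nonempty.2 fun _ ↦ hne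
  have hA_le_one : ∀ x i, A x i ≤ 1 := fun x i ↦
    hA1 x ▸ single_le_sum (fun j _ ↦ hA0 x j) (mem_univ i)
  have hper : ∀ i, 1 / card ι + α ≤
      (#(P hi) : ℝ)⁻¹ * ∑ x ∈ P hi, A x i + (1 - ρ ^ L) := by
    intro i
    have hcard_i : (0 : ℝ) < #(Ω i) := by exact_mod_cast (hne.mono (hΩ i).1).card_pos
    have hρ_le : ρ ^ L ≤ #(P hi) / #(P i) := by
      simp only [P, ρ, card_piFinset_const, Nat.cast_pow, ← div_pow]
      gcongr
      exact (hΩ i).2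
    calc 1 / card ι + α ≤ (#(P i) : ℝ)⁻¹ * ∑ x ∈ P i, A x i := by
          simpa only [P, card_piFinset_const, Nat.cast_pow] using hsucc i
      _ ≤ (#(P hi) : ℝ)⁻¹ * ∑ x ∈ P hi, A x i + (1 - #(P hi) / #(P i)) :=
          inv_card_mul_sum_le_of_subset (piFinset_subset _ _ fun _ ↦ (hΩ i).1) hP_ne
            (fun x _ ↦ hA0 x i) (fun x _ ↦ hA_le_one x i)
      _ ≤ (#(P hi) : ℝ)⁻¹ * ∑ x ∈ P hi, A x i + (1 - ρ ^ L) := by linarith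
  have hcard_ι : (0 : ℝ) < card ι := by exact_mod_cast card_pos_iff.2 ⟨lo⟩
  have hsum := sum_le_sum fun i (_ : i ∈ univ) ↦ hper i
  rw [sum_add_distrib, sum_add_distrib, sum_inv_card_mul_sum_eq_one hP_ne hA1] at hsum
  simp only [sum_const, card_univ, nsmul_eq_mul, mul_one_div_cancel hcard_ι.ne'] at hsum
  nlinarith

theorem stmt4_general (q r L : ℕ) (H : Fin q → Fin q → Prop)
    (V : Type) [Fintype V] [DecidableEq V]
    (Gs : Fin (r + 1) → SimpleGraph V)
    (hsub : ∀ i, Gs 0 ≤ Gs i ∧ Gs i ≤ Gs (Fin.last r))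
    (hcol : ∀ i, ∃ σ, IsHColoring H (Gs i) σ)
    (Ω : Fin (r + 1) → Finset (V → Fin q))
    (hΩ : ∀ i, Ω i = Finset.univ.filter (fun σ => IsHColoring H (Gs i) σ))
    (A : (Fin L → (V → Fin q)) → Fin (r + 1) → ℝ)
    (hA0 : ∀ x i, 0 ≤ A x i) (hA1 : ∀ x, ∑ i, A x i = 1)
    (α : ℝ) (hα : 0 < α)
    (hsucc : ∀ i : Fin (r + 1),
      (1 : ℝ) / (r + 1) + α ≤
        ∑ x : Fin L → (V → Fin q),
          (if ∀ k, x k ∈ Ω i then (((Ω i).card : ℝ) ^ L)⁻¹ * A x i else 0))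
    (η : ℝ)
    (hη : η = 1 - ((Ω (Fin.last r)).card : ℝ) / ((Ω 0).card : ℝ)) :
    (L : ℝ) ≥ α / η := by
  have hanti : ∀ i j, Gs i ≤ Gs j → Ω j ⊆ Ω i := fun i j hij σ ↦ by
    simpa only [hΩ, mem_filter, mem_univ, true_and] using IsHColoring.mono hij
  have hne : (Ω (Fin.last r)).Nonempty := by
    obtain ⟨σ, hσ⟩ := hcol (Fin.last r)
    exact ⟨σ, by simpa [hΩ] using hσ⟩
  have hsucc' : ∀ i, 1 / card (Fin (r + 1)) + α ≤
      ((#(Ω i) : ℝ) ^ L)⁻¹ * ∑ x ∈ piFinset (fun _ ↦ Ω i), A x i := fun i ↦ by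
    convert hsucc i using 1
    · simp
    · rw [mul_sum, ← sum_filter]
      congr 1
      ext x
      simp
  have hbound := le_one_sub_pow_of_forall_success Ω 0 (Fin.last r)
    (fun i ↦ ⟨hanti _ _ (hsub i).2, hanti _ _ (hsub i).1⟩) hne A hA0 hA1 hsucc'
  have hαη : α ≤ L * η := hη ▸ hbound.trans (one_sub_pow_le_mul_one_sub (by positivity) L)
  have hη_pos : 0 < η := pos_of_mul_pos_right (hα.trans_le hαη) (Nat.cast_nonneg L)
  rw [ge_iff_le, div_le_iff₀ hη_pos]
  linarith

/-- Sample-complexity lower bound: for a nested family `Gs 0 ⊆ Gs i ⊆ Gs (last)` of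
distinct `H`-colorable graphs with pairwise distinct sets of `H`-colorings, any
(randomized) structure learning algorithm `A` that, given `L` i.i.d. uniform
`H`-colorings of any `Gs i`, outputs `i` with probability at least `1/(r+1) + α`,
must satisfy `L ≥ α / η` where `η = 1 - |Ω(G_last)| / |Ω(G_0)|`. -/
theorem stmt4 (q r L : ℕ) (H : Fin q → Fin q → Prop)
    (V : Type) [Fintype V] [DecidableEq V]
    (Gs : Fin (r + 1) → SimpleGraph V)
    (hsub : ∀ i, Gs 0 ≤ Gs i ∧ Gs i ≤ Gs (Fin.last r))
    (hcol : ∀ i, ∃ σ, IsHColoring H (Gs i) σ)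
    (hid : ∀ i j : Fin (r + 1),
      {σ | IsHColoring H (Gs i) σ} = {σ | IsHColoring H (Gs j) σ} → i = j)
    (Ω : Fin (r + 1) → Finset (V → Fin q))
    (hΩ : ∀ i, Ω i = Finset.univ.filter (fun σ => IsHColoring H (Gs i) σ))
    (A : (Fin L → (V → Fin q)) → Fin (r + 1) → ℝ)
    (hA0 : ∀ x i, 0 ≤ A x i) (hA1 : ∀ x, ∑ i, A x i = 1)
    (α : ℝ) (hα : 0 < α)
    (hsucc : ∀ i : Fin (r + 1),
      (1 : ℝ) / (r + 1) + α ≤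
        ∑ x : Fin L → (V → Fin q),
          (if ∀ k, x k ∈ Ω i then (((Ω i).card : ℝ) ^ L)⁻¹ * A x i else 0))
    (η : ℝ)
    (hη : η = 1 - ((Ω (Fin.last r)).card : ℝ) / ((Ω 0).card : ℝ)) :
    (L : ℝ) ≥ α / η :=
  stmt4_general q r L H V Gs hsub hcol Ω hΩ A hA0 hA1 α hα hsucc η hη
end

section
/- Let G be a graph of maximum degree at most d with q >= d+1 colors. Remove two nonadjacent vertices u, v to form G', and for a color c and nonnegative integers s, t let A(c,s,t) denote the set of proper q-colorings of G' in which color c appears exactly s times in the neighborhood of u (in G) and exactly t times in the neighborhood of v (in G). Then |A(c,0,0)| >= |A(c,s,t)| / d^{s+t}. -/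
/-- `A(c,s,t)`: proper `q`-colorings of the induced subgraph `G' = G - {u,v}` in which
color `c` appears exactly `s` times in `N(u)` and exactly `t` times in `N(v)`. -/
def Aset (q : ℕ) {V : Type} (G : SimpleGraph V) (u v : V) (c : Fin q) (s t : ℕ) :
    Set ({w : V // w ≠ u ∧ w ≠ v} → Fin q) :=
  {σ | (∀ a b : {w : V // w ≠ u ∧ w ≠ v}, G.Adj ↑a ↑b → σ a ≠ σ b) ∧
    {w : {w : V // w ≠ u ∧ w ≠ v} | G.Adj u ↑w ∧ σ w = c}.ncard = s ∧
    {w : {w : V // w ≠ u ∧ w ≠ v} | G.Adj v ↑w ∧ σ w = c}.ncard = t}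

/-!
Recolor every `c`-colored neighbor `w` of `u` or `v` with a color that differs from `c` and from
the colors of its neighbors in `G'`. Such a color exists: one of the at most `d` neighbors of `w`
is `u` or `v`, so at most `d - 1 + 1 < q` colors are forbidden. The recolored vertices all had
color `c`, hence are pairwise nonadjacent, and the result lies in `A(c,0,0)`. A coloring in
`A(c,s,t)` is recovered from its image together with its `c`-colored parts of `N(u)` and `N(v)`,
for which there are at most `C(d,s) * C(d,t) ≤ d^(s+t)` choices.
-/

open Finset

lemma exists_ne_forall_ne_of_ncard_add_one_lt {α β : Type*} [Finite α] [Finite β]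
    (c : α) (σ : β → α) {S : Set β} (hS : S.ncard + 1 < Nat.card α) :
    ∃ a, a ≠ c ∧ ∀ x ∈ S, a ≠ σ x := by
  have hne : insert c (σ '' S) ≠ Set.univ := by
    intro h
    have := (Set.ncard_insert_le c (σ '' S)).trans (Nat.add_le_add_right (Set.ncard_image_le) 1)
    rw [h, Set.ncard_univ] at this
    omega
  obtain ⟨a, ha⟩ := (Set.ne_univ_iff_exists_notMem _).1 hne
  exact ⟨a, fun h => ha (h ▸ Set.mem_insert _ _),
    fun x hx h => ha (Set.mem_insert_of_mem _ ⟨x, hx, h.symm⟩)⟩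

lemma eq_of_eq_off_colorClass {T α : Type*} {τ σ₁ σ₂ : T → α} {c : α} {X : Set T}
    (h₁ : ∀ w, ¬ (w ∈ X ∧ σ₁ w = c) → τ w = σ₁ w)
    (h₂ : ∀ w, ¬ (w ∈ X ∧ σ₂ w = c) → τ w = σ₂ w)
    (hX : ∀ w ∈ X, σ₁ w = c ↔ σ₂ w = c) : σ₁ = σ₂ := by
  funext w
  by_cases hw : w ∈ X ∧ σ₁ w = c
  · rw [hw.2, (hX w hw.1).1 hw.2]
  · rw [← h₁ w hw, h₂ w fun h => hw ⟨h.1, (hX w h.1).2 h.2⟩]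

namespace SimpleGraph

variable {V : Type} {G : SimpleGraph V}

lemma ncard_setOf_adj_subtype_le [Finite V] (p : V → Prop) (z : V) :
    {x : Subtype p | G.Adj z x}.ncard ≤ (G.neighborSet z).ncard :=
  Set.ncard_le_ncard_of_injOn Subtype.val (fun _ hx => hx) Subtype.val_injective.injOn

lemma ncard_setOf_adj_subtype_lt [Finite V] {p : V → Prop} {z y : V} (hy : ¬ p y)
    (hzy : G.Adj z y) : {x : Subtype p | G.Adj z x}.ncard < (G.neighborSet z).ncard := by
  rw [← Set.ncard_image_of_injective _ Subtype.val_injective]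
  refine Set.ncard_lt_ncard ⟨?_, fun h => ?_⟩
  · rintro _ ⟨x, hx, rfl⟩
    exact hx
  · obtain ⟨x, -, rfl⟩ := h hzy
    exact hy x.2

end SimpleGraph

open SimpleGraph

abbrev Punctured {V : Type} (u v : V) : Type := {w : V // w ≠ u ∧ w ≠ v}

section Recoloring

variable {q d : ℕ} {V : Type} [Finite V] {G : SimpleGraph V} {u v : V}

lemma exists_recoloring_mem_Aset_zero (hdeg : ∀ w : V, (G.neighborSet w).ncard ≤ d)
    (hq : d + 1 ≤ q) (c : Fin q) {σ : Punctured u v → Fin q}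
    (hσ : ∀ a b : Punctured u v, G.Adj a b → σ a ≠ σ b) :
    ∃ τ ∈ Aset q G u v c 0 0,
      ∀ w : Punctured u v, ¬ ((G.Adj u w ∨ G.Adj v w) ∧ σ w = c) → τ w = σ w := by
  have fresh : ∀ w : Punctured u v, ∃ a : Fin q, (G.Adj u w ∨ G.Adj v w) →
      a ≠ c ∧ ∀ x : Punctured u v, G.Adj w x → a ≠ σ x := by
    intro w
    by_cases hw : G.Adj u w ∨ G.Adj v w
    · obtain ⟨z, hz, hwz⟩ : ∃ z, ¬ (z ≠ u ∧ z ≠ v) ∧ G.Adj w z :=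
        hw.elim (fun h => ⟨u, by simp, h.symm⟩) (fun h => ⟨v, by simp, h.symm⟩)
      have hlt : {x : Punctured u v | G.Adj w x}.ncard < d :=
        lt_of_lt_of_le (ncard_setOf_adj_subtype_lt (p := fun z => z ≠ u ∧ z ≠ v) hz hwz)
          (hdeg w)
      obtain ⟨a, hac, ha⟩ := exists_ne_forall_ne_of_ncard_add_one_lt c σ
        (S := {x : Punctured u v | G.Adj w x}) (by rw [Nat.card_fin]; omega)
      exact ⟨a, fun _ => ⟨hac, ha⟩⟩
    · exact ⟨c, fun h => absurd h hw⟩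
  choose f hf using fresh
  classical
  set τ : Punctured u v → Fin q :=
    fun w => if (G.Adj u w ∨ G.Adj v w) ∧ σ w = c then f w else σ w
  have hτ : ∀ w : Punctured u v, (G.Adj u w ∨ G.Adj v w) → τ w ≠ c := by
    intro w hw hc
    by_cases h : (G.Adj u w ∨ G.Adj v w) ∧ σ w = c
    · exact (hf w h.1).1 (by simpa [τ, h] using hc)
    · exact h ⟨hw, by simpa [τ, h] using hc⟩
  refine ⟨τ, ⟨?_, ?_, ?_⟩, fun w hw => if_neg hw⟩
  · intro a b hab
    simp only [τ]
    split_ifs with ha hb hb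
    · exact absurd (ha.2.trans hb.2.symm) (hσ a b hab)
    · exact (hf a ha.1).2 b hab
    · exact ((hf b hb.1).2 a hab.symm).symm
    · exact hσ a b hab
  · exact (Set.ncard_eq_zero).2 <|
      Set.eq_empty_of_forall_notMem fun w hw => hτ w (Or.inl hw.1) hw.2
  · exact (Set.ncard_eq_zero).2 <|
      Set.eq_empty_of_forall_notMem fun w hw => hτ w (Or.inr hw.1) hw.2

lemma ncard_Aset_le_pow_mul (hdeg : ∀ w : V, (G.neighborSet w).ncard ≤ d) (hq : d + 1 ≤ q)
    (c : Fin q) (s t : ℕ) :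
    (Aset q G u v c s t).ncard ≤ d ^ (s + t) * (Aset q G u v c 0 0).ncard := by
  classical
  have := Fintype.ofFinite (Punctured u v)
  choose! F hF hFσ using fun σ (hσ : σ ∈ Aset q G u v c s t) =>
    exists_recoloring_mem_Aset_zero hdeg hq c hσ.1
  let N (z : V) : Finset (Punctured u v) := {w | G.Adj z w}
  let colored (z : V) (σ : Punctured u v → Fin q) : Finset (Punctured u v) :=
    {w | G.Adj z w ∧ σ w = c}
  have hN (z : V) : #(N z) ≤ d := by
    have := (ncard_setOf_adj_subtype_le (G := G) (fun w => w ≠ u ∧ w ≠ v) z).trans (hdeg z)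
    simpa [N, ← Set.ncard_coe_finset] using this
  have hcolored (z : V) {σ} {k : ℕ}
      (hk : {w : Punctured u v | G.Adj z w ∧ σ w = c}.ncard = k) :
      colored z σ ∈ powersetCard k (N z) := by
    refine mem_powersetCard.2 ⟨fun w hw => ?_, ?_⟩
    · simp only [colored, N, mem_filter, mem_univ, true_and] at hw ⊢
      exact hw.1
    · simpa [colored, ← Set.ncard_coe_finset] using hk
  calc (Aset q G u v c s t).ncard
      ≤ (Aset q G u v c 0 0 ×ˢ ((powersetCard s (N u) : Set (Finset (Punctured u v))) ×ˢ
          (powersetCard t (N v) : Set (Finset (Punctured u v))))).ncard := by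
        refine Set.ncard_le_ncard_of_injOn (fun σ => (F σ, colored u σ, colored v σ))
          (fun σ hσ => ⟨hF σ hσ, hcolored u hσ.2.1, hcolored v hσ.2.2⟩) ?_
          (Set.toFinite _)
        intro σ₁ h₁ σ₂ h₂ h
        simp only [Prod.mk.injEq] at h
        obtain ⟨hF₁₂, hu, hv⟩ := h
        refine eq_of_eq_off_colorClass (X := {w | G.Adj u w ∨ G.Adj v w}) (hFσ σ₁ h₁)
          (hF₁₂ ▸ hFσ σ₂ h₂) ?_
        rintro w (hw | hw)
        · simpa [colored, hw] using congrArg (w ∈ ·) hu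
        · simpa [colored, hw] using congrArg (w ∈ ·) hv
    _ = (Aset q G u v c 0 0).ncard * ((#(N u)).choose s * (#(N v)).choose t) := by
        simp only [Set.ncard_prod, Set.ncard_coe_finset, card_powersetCard]
    _ ≤ d ^ (s + t) * (Aset q G u v c 0 0).ncard := by
        rw [mul_comm, pow_add]
        gcongr
        · exact (Nat.choose_le_choose s (hN u)).trans (Nat.choose_le_pow d s)
        · exact (Nat.choose_le_choose t (hN v)).trans (Nat.choose_le_pow d t)

end Recoloring

theorem stmt8_general (q d : ℕ) (V : Type) [Fintype V] (G : SimpleGraph V)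
    (hdeg : ∀ w : V, (G.neighborSet w).ncard ≤ d)
    (hq : d + 1 ≤ q)
    (u v : V)
    (c : Fin q) (s t : ℕ) :
    ((Aset q G u v c 0 0).ncard : ℝ) ≥
      ((Aset q G u v c s t).ncard : ℝ) / (d : ℝ) ^ (s + t) := by
  refine div_le_of_le_mul₀ (by positivity) (by positivity) ?_
  rw [mul_comm]
  exact_mod_cast ncard_Aset_le_pow_mul (u := u) (v := v) hdeg hq c s t

/-- With max degree at most `d` and `q ≥ d+1` colors, removing nonadjacent `u, v`,
one has `|A(c,0,0)| ≥ |A(c,s,t)| / d^{s+t}`. -/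
theorem stmt8 (q d : ℕ) (V : Type) [Fintype V] (G : SimpleGraph V)
    (hdeg : ∀ w : V, (G.neighborSet w).ncard ≤ d)
    (hq : d + 1 ≤ q)
    (u v : V) (huv : u ≠ v) (hnadj : ¬ G.Adj u v)
    (c : Fin q) (s t : ℕ) :
    ((Aset q G u v c 0 0).ncard : ℝ) ≥
      ((Aset q G u v c s t).ncard : ℝ) / (d : ℝ) ^ (s + t) :=
  stmt8_general q d V G hdeg hq u v c s t
end

section
/- Let q >= 3 and m, t be positive integers with t < q. In every proper q-coloring of the graph G_{m,t}, all cliques C_1, ..., C_m are colored by the same set of q-1 colors, and all independent sets I_1, ..., I_m are monochromatic in the single remaining color; the same holds for C_1', ..., C_m' and I_1', ..., I_m'. -/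
/-- Vertices of `G_{m,t}`: cliques `C_i` and `C_i'` (each a copy of `Fin m × Fin (q-1)`),
independent sets `I_i` and `I_i'` (copies of `Fin m × Fin t`), and vertices `s_i`. -/
abbrev Vmt (m q t : ℕ) :=
  (Fin m × Fin (q - 1)) ⊕ ((Fin m × Fin (q - 1)) ⊕ ((Fin m × Fin t) ⊕ ((Fin m × Fin t) ⊕ Fin m)))

def CV {m q t : ℕ} (i : Fin m) (x : Fin (q - 1)) : Vmt m q t := Sum.inl (i, x)
def CV' {m q t : ℕ} (i : Fin m) (x : Fin (q - 1)) : Vmt m q t := Sum.inr (Sum.inl (i, x))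
def IV {m q t : ℕ} (i : Fin m) (y : Fin t) : Vmt m q t := Sum.inr (Sum.inr (Sum.inl (i, y)))
def IV' {m q t : ℕ} (i : Fin m) (y : Fin t) : Vmt m q t :=
  Sum.inr (Sum.inr (Sum.inr (Sum.inl (i, y))))
def SV {m q t : ℕ} (i : Fin m) : Vmt m q t := Sum.inr (Sum.inr (Sum.inr (Sum.inr i)))

/-- Base relation of `G_{m,t}`.  `blk b i` is the `t`-block partition of the clique `C_i`
(`b = false`) resp. `C_i'` (`b = true`); `f i` (resp. `g i`) is the vertex of `I_i`
(resp. `I_i'`) adjacent to `s_i`.  Edges: cliques `C_i`, `C_i'`; complete bipartite graphs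
`C_i — I_i` and `C_i' — I_i'`; the `y`-th vertex of `I_{i-1}` joined to the block
`C_{i, y}` (likewise primed); `s_i` joined to one vertex of `I_i` and one of `I_i'`. -/
def gmtRel (m q t : ℕ) (blk : Bool → Fin m → Fin (q - 1) → Fin t)
    (f g : Fin m → Fin t) : Vmt m q t → Vmt m q t → Prop
  | Sum.inl (i, _), Sum.inl (j, _) => i = j
  | Sum.inl (i, x), Sum.inr (Sum.inr (Sum.inl (j, y))) =>
      i = j ∨ ((j : ℕ) + 1 = (i : ℕ) ∧ blk false i x = y)
  | Sum.inr (Sum.inl (i, _)), Sum.inr (Sum.inl (j, _)) => i = j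
  | Sum.inr (Sum.inl (i, x)), Sum.inr (Sum.inr (Sum.inr (Sum.inl (j, y)))) =>
      i = j ∨ ((j : ℕ) + 1 = (i : ℕ) ∧ blk true i x = y)
  | Sum.inr (Sum.inr (Sum.inr (Sum.inr i))), Sum.inr (Sum.inr (Sum.inl (j, y))) =>
      i = j ∧ y = f i
  | Sum.inr (Sum.inr (Sum.inr (Sum.inr i))), Sum.inr (Sum.inr (Sum.inr (Sum.inl (j, y)))) =>
      i = j ∧ y = g i
  | _, _ => False

/-- The graph `G_{m,t}`. -/
def gmtGraph (m q t : ℕ) (blk : Bool → Fin m → Fin (q - 1) → Fin t)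
    (f g : Fin m → Fin t) : SimpleGraph (Vmt m q t) :=
  SimpleGraph.fromRel (gmtRel m q t blk f g)

/-- The block partition is into `t` almost-equal parts (sizes `⌊(q-1)/t⌋` or `⌈(q-1)/t⌉`). -/
def BlkAlmostEqual (m q t : ℕ) (blk : Bool → Fin m → Fin (q - 1) → Fin t) : Prop :=
  ∀ (b : Bool) (i : Fin m) (j : Fin t),
    {x : Fin (q - 1) | blk b i x = j}.ncard = (q - 1) / t ∨
    {x : Fin (q - 1) | blk b i x = j}.ncard = (q - 1 + t - 1) / t

/-- A proper `q`-coloring. -/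
def IsProperColoring {V : Type} (q : ℕ) (G : SimpleGraph V) (σ : V → Fin q) : Prop :=
  ∀ u v : V, G.Adj u v → σ u ≠ σ v

/-!
Each clique `C_i` is joined to every vertex of `I_i` and has `q - 1` vertices, so it uses all
colors but one, and that missing color is the color of every vertex of `I_i`: thus `I_i` is
monochromatic, colored by the color absent from `C_i`. Every vertex of `C_i` is adjacent to a
vertex of `I_{i-1}`, so the color of `I_{i-1}` is also absent from `C_i` and therefore equals the
color of `I_i`. Along the chain `I_1, …, I_m` the missing color is thus constant.
-/

theorem Function.Injective.range_eq_compl_singleton {α β : Type*} [Finite β] {φ : α → β}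
    (hφ : Function.Injective φ) (hcard : Nat.card α + 1 = Nat.card β) {c : β}
    (hc : c ∉ Set.range φ) : Set.range φ = {c}ᶜ := by
  refine Set.eq_of_subset_of_ncard_le (fun d hd => ?_) ?_
  · rintro rfl
    exact hc hd
  · rw [Set.ncard_compl, Set.ncard_singleton, Set.ncard_range_of_injective hφ]
    omega

theorem Fin.apply_eq_apply_zero_of_succ {n : ℕ} {β : Type*} {c : Fin (n + 1) → β}
    (h : ∀ i : Fin n, c i.succ = c i.castSucc) (i : Fin (n + 1)) : c i = c 0 := by
  induction i using Fin.induction with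
  | zero => rfl
  | succ i ih => exact (h i).trans ih

theorem IsProperColoring.range_eq_compl_of_clique {V : Type} {q : ℕ} {G : SimpleGraph V}
    {σ : V → Fin q} (hσ : IsProperColoring q G σ) {α : Type*} [Finite α]
    (hα : Nat.card α + 1 = q) (K : α → V) (hK : ∀ a b, a ≠ b → G.Adj (K a) (K b))
    {v : V} (hv : ∀ a, G.Adj (K a) v) : Set.range (σ ∘ K) = {σ v}ᶜ := by
  refine Function.Injective.range_eq_compl_singleton (fun a b hab => ?_) (by simpa using hα) ?_
  · by_contra hne
    exact hσ _ _ (hK a b hne) hab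
  · rintro ⟨a, ha⟩
    exact hσ _ _ (hv a) ha

section Gmt

variable {m q t : ℕ}

def cliqueVertex : Bool → Fin m → Fin (q - 1) → Vmt m q t
  | false => CV
  | true => CV'

def indepVertex : Bool → Fin m → Fin t → Vmt m q t
  | false => IV
  | true => IV'

variable (blk : Bool → Fin m → Fin (q - 1) → Fin t) (f g : Fin m → Fin t)

theorem gmtGraph_adj_cliqueVertex (b : Bool) (i : Fin m) {x x' : Fin (q - 1)}
    (hx : x ≠ x') :
    (gmtGraph m q t blk f g).Adj (cliqueVertex b i x) (cliqueVertex b i x') := by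
  cases b <;> exact ⟨by simp [cliqueVertex, CV, CV', hx], Or.inl rfl⟩

theorem gmtGraph_adj_cliqueVertex_indepVertex (b : Bool) (i : Fin m) (x : Fin (q - 1))
    (y : Fin t) : (gmtGraph m q t blk f g).Adj (cliqueVertex b i x) (indepVertex b i y) := by
  cases b <;>
    exact ⟨by simp [cliqueVertex, indepVertex, CV, CV', IV, IV'], Or.inl (Or.inl rfl)⟩

theorem gmtGraph_adj_cliqueVertex_indepVertex_pred (b : Bool) {i j : Fin m}
    (hij : (j : ℕ) + 1 = i) (x : Fin (q - 1)) :
    (gmtGraph m q t blk f g).Adj (cliqueVertex b i x) (indepVertex b j (blk b i x)) := by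
  cases b <;>
    exact ⟨by simp [cliqueVertex, indepVertex, CV, CV', IV, IV'],
      Or.inl (Or.inr ⟨hij, rfl⟩)⟩

theorem IsProperColoring.gmtGraph_exists_missing_color (hm : 1 ≤ m) (ht : 1 ≤ t)
    {σ : Vmt m q t → Fin q}
    (hσ : IsProperColoring q (gmtGraph m q t blk f g) σ) (b : Bool) :
    ∃ c : Fin q, (∀ i y, σ (indepVertex b i y) = c) ∧
      ∀ i, Set.range (σ ∘ cliqueVertex b i) = {c}ᶜ := by
  obtain ⟨n, rfl⟩ : ∃ n, m = n + 1 := ⟨m - 1, by omega⟩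
  have y₀ : Fin t := ⟨0, ht⟩
  have hq : Nat.card (Fin (q - 1)) + 1 = q := by
    have := (σ (indepVertex b 0 y₀)).pos
    simp only [Nat.card_eq_fintype_card, Fintype.card_fin]
    omega
  have hrange (i : Fin (n + 1)) (y : Fin t) :
      Set.range (σ ∘ cliqueVertex b i) = {σ (indepVertex b i y)}ᶜ :=
    hσ.range_eq_compl_of_clique hq _ (fun _ _ => gmtGraph_adj_cliqueVertex blk f g b i)
      (fun x => gmtGraph_adj_cliqueVertex_indepVertex blk f g b i x y)
  have hmono (i : Fin (n + 1)) (y : Fin t) :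
      σ (indepVertex b i y) = σ (indepVertex b i y₀) := by
    simpa using (hrange i y).symm.trans (hrange i y₀)
  have hstep (i : Fin n) :
      σ (indepVertex b i.succ y₀) = σ (indepVertex b i.castSucc y₀) := by
    have hmiss :
        σ (indepVertex b i.castSucc y₀) ∉ Set.range (σ ∘ cliqueVertex b i.succ) := by
      rintro ⟨x, hx⟩
      rw [← hmono _ (blk b i.succ x)] at hx
      exact hσ _ _ (gmtGraph_adj_cliqueVertex_indepVertex_pred blk f g b (by simp) x) hx
    simpa [hrange i.succ y₀, eq_comm] using hmiss
  have hchain :=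
    Fin.apply_eq_apply_zero_of_succ (c := fun i => σ (indepVertex b i y₀)) hstep
  refine ⟨σ (indepVertex b 0 y₀), fun i y => ?_, fun i => ?_⟩
  · rw [hmono, hchain]
  · rw [hrange i y₀, hchain]

end Gmt

theorem stmt10_general (q m t : ℕ) (hm : 1 ≤ m) (ht : 1 ≤ t)
    (blk : Bool → Fin m → Fin (q - 1) → Fin t)
    (f g : Fin m → Fin t)
    (σ : Vmt m q t → Fin q)
    (hσ : IsProperColoring q (gmtGraph m q t blk f g) σ) :
    ∃ c₀ c₁ : Fin q,
      (∀ (i : Fin m) (y : Fin t), σ (IV i y) = c₀) ∧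
      (∀ i : Fin m, Set.range (fun x : Fin (q - 1) => σ (CV i x)) = {c : Fin q | c ≠ c₀}) ∧
      (∀ (i : Fin m) (y : Fin t), σ (IV' i y) = c₁) ∧
      (∀ i : Fin m, Set.range (fun x : Fin (q - 1) => σ (CV' i x)) = {c : Fin q | c ≠ c₁}) := by
  obtain ⟨c₀, hI, hC⟩ := hσ.gmtGraph_exists_missing_color blk f g hm ht false
  obtain ⟨c₁, hI', hC'⟩ := hσ.gmtGraph_exists_missing_color blk f g hm ht true
  exact ⟨c₀, c₁, hI, hC, hI', hC'⟩

/-- In every proper q-coloring of G_{m,t}, all cliques C_i are colored by the same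
set of q-1 colors and all I_i are monochromatic in the single remaining color;
likewise for the primed copies. -/
theorem stmt10 (q m t : ℕ) (hq : 3 ≤ q) (hm : 1 ≤ m) (ht : 1 ≤ t) (htq : t < q)
    (blk : Bool → Fin m → Fin (q - 1) → Fin t)
    (hblk : BlkAlmostEqual m q t blk)
    (f g : Fin m → Fin t)
    (σ : Vmt m q t → Fin q)
    (hσ : IsProperColoring q (gmtGraph m q t blk f g) σ) :
    ∃ c₀ c₁ : Fin q,
      (∀ (i : Fin m) (y : Fin t), σ (IV i y) = c₀) ∧
      (∀ i : Fin m, Set.range (fun x : Fin (q - 1) => σ (CV i x)) = {c : Fin q | c ≠ c₀}) ∧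
      (∀ (i : Fin m) (y : Fin t), σ (IV' i y) = c₁) ∧
      (∀ i : Fin m, Set.range (fun x : Fin (q - 1) => σ (CV' i x)) = {c : Fin q | c ≠ c₁}) :=
  stmt10_general q m t hm ht blk f g σ hσ
end

section
/- Every graph in the family G_{m,t} (i.e., G_{m,t} together with any subset of the extra edges {x_i, y_i}) has exactly (2q + 2t - 1) m vertices and maximum degree at most max{ q + t, q + ceil((q-1)/t) + 1 }. In particular, for t = ceil(sqrt(q-1)), the maximum degree is at most q + ceil(sqrt(q-1)) + 1. -/
/-- Extra edges {x_i, y_i} joining a fixed vertex xf i of C_i to a fixed vertex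
yf i of I_i' (not adjacent to s_i); S selects which of the extra edges are present. -/
def gmtExtra (m q t : ℕ) (xf : Fin m → Fin (q - 1)) (yf : Fin m → Fin t)
    (S : Fin m → Prop) : Vmt m q t → Vmt m q t → Prop
  | Sum.inl (i, x), Sum.inr (Sum.inr (Sum.inr (Sum.inl (j, y)))) =>
      S i ∧ i = j ∧ x = xf i ∧ y = yf i
  | _, _ => False

/-- A member of the family 𝒢_{m,t}. -/
def gmtFamGraph (m q t : ℕ) (blk : Bool → Fin m → Fin (q - 1) → Fin t)
    (f g : Fin m → Fin t) (xf : Fin m → Fin (q - 1)) (yf : Fin m → Fin t)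
    (S : Fin m → Prop) : SimpleGraph (Vmt m q t) :=
  SimpleGraph.fromRel (fun a b => gmtRel m q t blk f g a b ∨ gmtExtra m q t xf yf S a b)

/-!
The neighbourhood of every vertex is covered by a few explicit pieces. A vertex of `C_i` sees
the other `q - 2` vertices of its clique, the `t` vertices of `I_i`, the one vertex of `I_{i-1}`
indexed by its block, and possibly `y_i`; a vertex of `I_i` or `I_i'` sees the `q - 1` vertices
of `C_i` (resp. `C_i'`), one block of the next clique, `s_i`, and (for `I_i'`) possibly `x_i`;
`s_i` has two neighbours. Blocks have at most `⌈(q - 1) / t⌉` vertices, and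
`⌈(q - 1) / t⌉ ≤ t` once `q - 1 ≤ t²`.
-/

theorem Set.ncard_union_le_of_le {α : Type*} {a b : Set α} {x y : ℕ}
    (ha : a.ncard ≤ x) (hb : b.ncard ≤ y) : (a ∪ b).ncard ≤ x + y :=
  (Set.ncard_union_le a b).trans (add_le_add ha hb)

theorem Set.ncard_range_le {α β : Type*} [Finite α] (f : α → β) :
    (Set.range f).ncard ≤ Nat.card α := by
  rw [← Set.image_univ]
  exact le_trans Set.ncard_image_le (Set.ncard_univ α).le

theorem Nat.add_sub_one_div_le_of_le_mul {n t : ℕ} (h : n ≤ t * t) : (n + t - 1) / t ≤ t := by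
  rcases Nat.eq_zero_or_pos t with rfl | ht
  · simp
  · rw [← Nat.lt_succ_iff, Nat.div_lt_iff_lt_mul ht, Nat.succ_mul]
    omega

theorem card_Vmt {m q t : ℕ} (hq : 1 ≤ q) :
    Fintype.card (Vmt m q t) = (2 * q + 2 * t - 1) * m := by
  obtain ⟨p, rfl⟩ : ∃ p, q = p + 1 := ⟨q - 1, by omega⟩
  simp only [Fintype.card_sum, Fintype.card_prod, Fintype.card_fin, Nat.add_sub_cancel]
  rw [show 2 * (p + 1) + 2 * t - 1 = 2 * p + 2 * t + 1 by omega]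
  ring

theorem BlkAlmostEqual.ncard_fiber_le {m q t : ℕ} {blk : Bool → Fin m → Fin (q - 1) → Fin t}
    (hblk : BlkAlmostEqual m q t blk) (b : Bool) (i : Fin m) (y : Fin t) :
    {x | blk b i x = y}.ncard ≤ (q - 1 + t - 1) / t := by
  have := y.pos
  rcases hblk b i y with h | h <;> rw [h]
  exact Nat.div_le_div_right (by omega)

theorem BlkAlmostEqual.ncard_succ_fiber_le {m q t : ℕ}
    {blk : Bool → Fin m → Fin (q - 1) → Fin t} (hblk : BlkAlmostEqual m q t blk) (b : Bool)
    (i : Fin m) (y : Fin t) :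
    {p : Fin m × Fin (q - 1) | (i : ℕ) + 1 = p.1 ∧ blk b p.1 p.2 = y}.ncard ≤
      (q - 1 + t - 1) / t := by
  by_cases hi : (i : ℕ) + 1 < m
  · calc _ ≤ (Prod.mk (⟨i + 1, hi⟩ : Fin m) '' {x | blk b ⟨i + 1, hi⟩ x = y}).ncard := by
          refine Set.ncard_le_ncard ?_
          rintro ⟨j, x⟩ ⟨hj, hx⟩
          obtain rfl : j = ⟨i + 1, hi⟩ := Fin.ext hj.symm
          exact ⟨x, hx, rfl⟩
      _ ≤ _ := le_trans Set.ncard_image_le (hblk.ncard_fiber_le b _ y)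
  · have hempty : {p : Fin m × Fin (q - 1) | (i : ℕ) + 1 = p.1 ∧ blk b p.1 p.2 = y} = ∅ :=
      Set.eq_empty_of_forall_notMem fun p hp => hi (hp.1 ▸ p.1.isLt)
    rw [hempty, Set.ncard_empty]
    exact Nat.zero_le _

theorem Fin.ncard_setOf_val_add_one_eq_le_one {m : ℕ} (k : ℕ) :
    {j : Fin m | (j : ℕ) + 1 = k}.ncard ≤ 1 :=
  (Set.ncard_le_one).2 fun _ ha _ hb => Fin.ext (by simp only [Set.mem_ofPred_eq] at ha hb; omega)

section neighborSet

variable {m q t : ℕ} {blk : Bool → Fin m → Fin (q - 1) → Fin t} {f g : Fin m → Fin t}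
  {xf : Fin m → Fin (q - 1)} {yf : Fin m → Fin t} {S : Fin m → Prop}

theorem neighborSet_CV_subset (i : Fin m) (x : Fin (q - 1)) :
    (gmtFamGraph m q t blk f g xf yf S).neighborSet (CV i x) ⊆
      CV i '' {x}ᶜ ∪ Set.range (IV i) ∪
        (fun j => IV j (blk false i x)) '' {j | (j : ℕ) + 1 = i} ∪ {IV' i (yf i)} := by
  rintro (⟨j, x'⟩ | ⟨j, x'⟩ | ⟨j, y⟩ | ⟨j, y⟩ | j) hw <;>
    aesop (add norm [gmtFamGraph, gmtRel, gmtExtra, CV, IV, IV'])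

theorem neighborSet_CV'_subset (i : Fin m) (x : Fin (q - 1)) :
    (gmtFamGraph m q t blk f g xf yf S).neighborSet (CV' i x) ⊆
      CV' i '' {x}ᶜ ∪ Set.range (IV' i) ∪
        (fun j => IV' j (blk true i x)) '' {j | (j : ℕ) + 1 = i} := by
  rintro (⟨j, x'⟩ | ⟨j, x'⟩ | ⟨j, y⟩ | ⟨j, y⟩ | j) hw <;>
    aesop (add norm [gmtFamGraph, gmtRel, gmtExtra, CV', IV'])

theorem neighborSet_IV_subset (i : Fin m) (y : Fin t) :
    (gmtFamGraph m q t blk f g xf yf S).neighborSet (IV i y) ⊆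
      Set.range (CV i) ∪
        Function.uncurry CV '' {p | (i : ℕ) + 1 = p.1 ∧ blk false p.1 p.2 = y} ∪ {SV i} := by
  rintro (⟨j, x'⟩ | ⟨j, x'⟩ | ⟨j, y⟩ | ⟨j, y⟩ | j) hw <;>
    aesop (add norm [gmtFamGraph, gmtRel, gmtExtra, CV, IV, SV])

theorem neighborSet_IV'_subset (i : Fin m) (y : Fin t) :
    (gmtFamGraph m q t blk f g xf yf S).neighborSet (IV' i y) ⊆
      Set.range (CV' i) ∪
        Function.uncurry CV' '' {p | (i : ℕ) + 1 = p.1 ∧ blk true p.1 p.2 = y} ∪ {SV i} ∪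
          {CV i (xf i)} := by
  rintro (⟨j, x'⟩ | ⟨j, x'⟩ | ⟨j, y⟩ | ⟨j, y⟩ | j) hw <;>
    aesop (add norm [gmtFamGraph, gmtRel, gmtExtra, CV, CV', IV', SV])

theorem neighborSet_SV_subset (i : Fin m) :
    (gmtFamGraph m q t blk f g xf yf S).neighborSet (SV i) ⊆ {IV i (f i), IV' i (g i)} := by
  rintro (⟨j, x'⟩ | ⟨j, x'⟩ | ⟨j, y⟩ | ⟨j, y⟩ | j) hw <;>
    aesop (add norm [gmtFamGraph, gmtRel, gmtExtra, IV, IV', SV])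

theorem ncard_neighborSet_CV_le (i : Fin m) (x : Fin (q - 1)) :
    ((gmtFamGraph m q t blk f g xf yf S).neighborSet (CV i x)).ncard ≤ q + t := by
  have hclique : (CV i '' {x}ᶜ : Set (Vmt m q t)).ncard ≤ q - 1 - 1 := by
    refine le_trans Set.ncard_image_le ?_
    rw [Set.ncard_compl, Set.ncard_singleton, Nat.card_fin]
  calc _ ≤ _ := Set.ncard_le_ncard (neighborSet_CV_subset i x)
    _ ≤ (q - 1 - 1) + t + 1 + 1 :=
      Set.ncard_union_le_of_le (Set.ncard_union_le_of_le (Set.ncard_union_le_of_le hclique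
        ((Set.ncard_range_le _).trans_eq (Nat.card_fin t)))
        (le_trans Set.ncard_image_le (Fin.ncard_setOf_val_add_one_eq_le_one _)))
        (Set.ncard_singleton _).le
    _ ≤ q + t := by have := x.isLt; omega

theorem ncard_neighborSet_CV'_le (i : Fin m) (x : Fin (q - 1)) :
    ((gmtFamGraph m q t blk f g xf yf S).neighborSet (CV' i x)).ncard ≤ q + t := by
  have hclique : (CV' i '' {x}ᶜ : Set (Vmt m q t)).ncard ≤ q - 1 - 1 := by
    refine le_trans Set.ncard_image_le ?_
    rw [Set.ncard_compl, Set.ncard_singleton, Nat.card_fin]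
  calc _ ≤ _ := Set.ncard_le_ncard (neighborSet_CV'_subset i x)
    _ ≤ (q - 1 - 1) + t + 1 :=
      Set.ncard_union_le_of_le (Set.ncard_union_le_of_le hclique
        ((Set.ncard_range_le _).trans_eq (Nat.card_fin t)))
        (le_trans Set.ncard_image_le (Fin.ncard_setOf_val_add_one_eq_le_one _))
    _ ≤ q + t := by have := x.isLt; omega

theorem ncard_neighborSet_IV_le (hblk : BlkAlmostEqual m q t blk) (i : Fin m) (y : Fin t) :
    ((gmtFamGraph m q t blk f g xf yf S).neighborSet (IV i y)).ncard ≤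
      q + (q - 1 + t - 1) / t + 1 :=
  calc _ ≤ _ := Set.ncard_le_ncard (neighborSet_IV_subset i y)
    _ ≤ (q - 1) + (q - 1 + t - 1) / t + 1 :=
      Set.ncard_union_le_of_le (Set.ncard_union_le_of_le
        ((Set.ncard_range_le _).trans_eq (Nat.card_fin _))
        (le_trans Set.ncard_image_le (hblk.ncard_succ_fiber_le false i y)))
        (Set.ncard_singleton _).le
    _ ≤ _ := by omega

theorem ncard_neighborSet_IV'_le (hq : 1 ≤ q) (hblk : BlkAlmostEqual m q t blk) (i : Fin m)
    (y : Fin t) :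
    ((gmtFamGraph m q t blk f g xf yf S).neighborSet (IV' i y)).ncard ≤
      q + (q - 1 + t - 1) / t + 1 :=
  calc _ ≤ _ := Set.ncard_le_ncard (neighborSet_IV'_subset i y)
    _ ≤ (q - 1) + (q - 1 + t - 1) / t + 1 + 1 :=
      Set.ncard_union_le_of_le (Set.ncard_union_le_of_le (Set.ncard_union_le_of_le
        ((Set.ncard_range_le _).trans_eq (Nat.card_fin _))
        (le_trans Set.ncard_image_le (hblk.ncard_succ_fiber_le true i y)))
        (Set.ncard_singleton _).le) (Set.ncard_singleton _).le
    _ = q + (q - 1 + t - 1) / t + 1 := by omega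

theorem ncard_neighborSet_SV_le (i : Fin m) :
    ((gmtFamGraph m q t blk f g xf yf S).neighborSet (SV i)).ncard ≤ 2 :=
  (Set.ncard_le_ncard (neighborSet_SV_subset i)).trans
    ((Set.ncard_insert_le _ _).trans (by rw [Set.ncard_singleton]))

theorem ncard_neighborSet_le (hq : 1 ≤ q) (hblk : BlkAlmostEqual m q t blk) (v : Vmt m q t) :
    ((gmtFamGraph m q t blk f g xf yf S).neighborSet v).ncard ≤
      max (q + t) (q + (q - 1 + t - 1) / t + 1) := by
  rcases v with ⟨i, x⟩ | ⟨i, x⟩ | ⟨i, y⟩ | ⟨i, y⟩ | i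
  · exact (ncard_neighborSet_CV_le i x).trans (le_max_left _ _)
  · exact (ncard_neighborSet_CV'_le i x).trans (le_max_left _ _)
  · exact (ncard_neighborSet_IV_le hblk i y).trans (le_max_right _ _)
  · exact (ncard_neighborSet_IV'_le hq hblk i y).trans (le_max_right _ _)
  · have := (f i).pos
    exact (ncard_neighborSet_SV_le i).trans (le_max_of_le_left (by omega))

end neighborSet

theorem stmt12_general (q m t : ℕ) (hq : 3 ≤ q)
    (blk : Bool → Fin m → Fin (q - 1) → Fin t)
    (hblk : BlkAlmostEqual m q t blk)
    (f g : Fin m → Fin t)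
    (xf : Fin m → Fin (q - 1)) (yf : Fin m → Fin t)
    (S : Fin m → Prop) :
    Fintype.card (Vmt m q t) = (2 * q + 2 * t - 1) * m ∧
    (∀ v : Vmt m q t,
      ((gmtFamGraph m q t blk f g xf yf S).neighborSet v).ncard ≤
        max (q + t) (q + (q - 1 + t - 1) / t + 1)) ∧
    (q - 1 ≤ t * t →
      ∀ v : Vmt m q t,
        ((gmtFamGraph m q t blk f g xf yf S).neighborSet v).ncard ≤ q + t + 1) := by
  have hq₁ : 1 ≤ q := by omega
  refine ⟨card_Vmt hq₁, ncard_neighborSet_le hq₁ hblk, fun hqt v => ?_⟩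
  have hceil := Nat.add_sub_one_div_le_of_le_mul hqt
  refine (ncard_neighborSet_le hq₁ hblk v).trans (max_le ?_ ?_) <;> omega

/-- Every graph in the family 𝒢_{m,t} has (2q+2t-1)m vertices and maximum degree at
most max(q+t, q+⌈(q-1)/t⌉+1); in particular, if t ≥ ⌈√(q-1)⌉ (i.e. t² ≥ q-1) the
maximum degree is at most q+t+1. -/
theorem stmt12 (q m t : ℕ) (hq : 3 ≤ q) (hm : 1 ≤ m) (ht : 1 ≤ t) (htq : t < q)
    (blk : Bool → Fin m → Fin (q - 1) → Fin t)
    (hblk : BlkAlmostEqual m q t blk)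
    (f g : Fin m → Fin t)
    (xf : Fin m → Fin (q - 1)) (yf : Fin m → Fin t)
    (hyf : ∀ i, yf i ≠ g i)
    (S : Fin m → Prop) :
    Fintype.card (Vmt m q t) = (2 * q + 2 * t - 1) * m ∧
    (∀ v : Vmt m q t,
      ((gmtFamGraph m q t blk f g xf yf S).neighborSet v).ncard ≤
        max (q + t) (q + (q - 1 + t - 1) / t + 1)) ∧
    (q - 1 ≤ t * t →
      ∀ v : Vmt m q t,
        ((gmtFamGraph m q t blk f g xf yf S).neighborSet v).ncard ≤ q + t + 1) :=
  stmt12_general q m t hq blk hblk f g xf yf S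
end

section
/- Let H be a constraint graph with a hard constraint {i,j} (i.e., {i,j} not an edge of H), and let G=(V,E) be an H-colorable graph on n vertices. Suppose that for every nonadjacent pair u, v of G, a uniformly random H-coloring assigns colors i to u and j to v with probability at least delta > 0. Given L >= (8/delta) log(n^2/(2 epsilon)) independent uniform H-colorings, the algorithm that declares {u,v} a non-edge iff some sample assigns i to u and j to v (and otherwise adds {u,v} to E_hat) outputs E_hat = E with probability at least 1 - epsilon. -/
/-- The graph output by the algorithm `structlearn-H` on samples `x`: the pair `{u,v}`
is declared a non-edge iff some sample assigns the incompatible colors `i, j` to `u, v`. -/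
def learnedGraph {q L : ℕ} {V : Type} (i j : Fin q) (x : Fin L → (V → Fin q)) :
    SimpleGraph V :=
  SimpleGraph.fromRel (fun u v =>
    ¬ ∃ k : Fin L, (x k u = i ∧ x k v = j) ∨ (x k u = j ∧ x k v = i))

lemma Set.ncard_setOf_forall_mem {α : Type*} (S : Set α) (L : ℕ) :
    {x : Fin L → α | ∀ k, x k ∈ S}.ncard = S.ncard ^ L := by
  have h : {x : Fin L → α | ∀ k, x k ∈ S} = Set.pi Set.univ fun _ => S := by
    ext x; simp [Set.mem_pi]
  rw [h, ← Nat.card_coe_set_eq, Nat.card_congr (Equiv.Set.univPi _), Nat.card_pi]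
  simp [Nat.card_coe_set_eq]

lemma Set.ncard_pow_sub_sum_le_ncard_forall_exists {α ι : Type*} [Finite α] (S : Set α)
    (P : Finset ι) (B : ι → Set α) (L : ℕ) :
    (S.ncard : ℝ) ^ L - ∑ p ∈ P, ((S \ B p).ncard : ℝ) ^ L ≤
      ({x : Fin L → α | (∀ k, x k ∈ S) ∧ ∀ p ∈ P, ∃ k, x k ∈ B p}.ncard : ℝ) := by
  have hcover : {x : Fin L → α | ∀ k, x k ∈ S} ⊆
      {x | (∀ k, x k ∈ S) ∧ ∀ p ∈ P, ∃ k, x k ∈ B p} ∪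
        ⋃ p ∈ P, {x : Fin L → α | ∀ k, x k ∈ S \ B p} := by
    intro x hx
    by_cases hmiss : ∃ p ∈ P, ∀ k, x k ∉ B p
    · obtain ⟨p, hp, hmiss⟩ := hmiss
      exact Or.inr (Set.mem_biUnion hp fun k => ⟨hx k, hmiss k⟩)
    · simp only [not_exists, not_and, not_forall, not_not] at hmiss
      exact Or.inl ⟨hx, hmiss⟩
  have hcount := (Set.ncard_le_ncard hcover).trans <| (Set.ncard_union_le _ _).trans <|
    Nat.add_le_add_left (P.set_ncard_biUnion_le _) _
  simp only [Set.ncard_setOf_forall_mem] at hcount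
  rw [sub_le_iff_le_add]
  exact_mod_cast hcount

lemma Set.ncard_sdiff_le_of_mul_le_ncard_inter {α : Type*} [Finite α] {S B : Set α} {δ : ℝ}
    (h : δ * S.ncard ≤ (S ∩ B).ncard) : ((S \ B).ncard : ℝ) ≤ (1 - δ) * S.ncard := by
  have hsplit : ((S ∩ B).ncard : ℝ) + (S \ B).ncard = S.ncard := by
    exact_mod_cast Set.ncard_inter_add_ncard_sdiff_eq_ncard S B
  linarith

lemma IsHColoring.not_colors_of_adj {q : ℕ} {H : Fin q → Fin q → Prop} {V : Type}
    {G : SimpleGraph V} {σ : V → Fin q} (hσ : IsHColoring H G σ) {i j : Fin q} (hij : ¬ H i j)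
    {u v : V} (huv : G.Adj u v) : ¬ (σ u = i ∧ σ v = j) := by
  rintro ⟨hu, hv⟩
  exact hij (hu ▸ hv ▸ hσ u v huv)

lemma learnedGraph_eq_of_forall_exists {q L : ℕ} {H : Fin q → Fin q → Prop} {i j : Fin q}
    (hij : ¬ H i j) {V : Type} {G : SimpleGraph V} {x : Fin L → V → Fin q}
    (hx : ∀ k, IsHColoring H G (x k))
    (hhit : ∀ u v, u ≠ v → ¬ G.Adj u v → ∃ k, x k u = i ∧ x k v = j) :
    learnedGraph i j x = G := by
  ext u v
  simp only [learnedGraph, SimpleGraph.fromRel_adj]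
  constructor
  · rintro ⟨huv, hsplit⟩
    by_contra hnadj
    obtain ⟨k, hk⟩ := hhit u v huv hnadj
    rcases hsplit with h | h
    · exact h ⟨k, Or.inl hk⟩
    · exact h ⟨k, Or.inr hk.symm⟩
  · intro hadj
    refine ⟨hadj.ne, Or.inl ?_⟩
    rintro ⟨k, hk | hk⟩
    · exact (hx k).not_colors_of_adj hij hadj hk
    · exact (hx k).not_colors_of_adj hij hadj.symm hk.symm

lemma sq_mul_one_sub_pow_le {n δ ε : ℝ} {L : ℕ} (hn : 2 ≤ n) (hδ : 0 < δ) (hδ1 : δ ≤ 1)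
    (hε : 0 < ε) (hε1 : ε ≤ 1) (hL : (8 / δ) * Real.log (n ^ 2 / (2 * ε)) ≤ L) :
    n ^ 2 * (1 - δ) ^ L ≤ ε := by
  set c := n ^ 2 / (2 * ε)
  have hc : 2 ≤ c := by rw [le_div_iff₀ (by positivity)]; nlinarith
  -- the constant 8 of the Chernoff bound is generous here: `δ L ≥ 2 log c` suffices
  have hlog : 2 * Real.log c ≤ δ * L := by
    have h8 : 8 * Real.log c ≤ δ * L := by
      rwa [div_mul_eq_mul_div, div_le_iff₀' hδ] at hL
    linarith [Real.log_nonneg (by linarith : (1 : ℝ) ≤ c)]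
  calc n ^ 2 * (1 - δ) ^ L ≤ n ^ 2 * Real.exp (-δ) ^ L := by
        gcongr
        exact Real.one_sub_le_exp_neg δ
    _ = n ^ 2 * Real.exp (-(δ * L)) := by rw [← Real.exp_nat_mul]; ring_nf
    _ ≤ n ^ 2 * Real.exp (-(2 * Real.log c)) := by gcongr
    _ = ε * (2 / c) := by
        rw [two_mul, neg_add, Real.exp_add, Real.exp_neg, Real.exp_log (by positivity)]
        simp only [c]
        field_simp
    _ ≤ ε := mul_le_of_le_one_right hε.le ((div_le_one₀ (by positivity)).mpr hc)

lemma Finset.card_mul_one_sub_pow_le {V : Type*} [Fintype V] {P : Finset (V × V)}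
    (hP : ∀ p ∈ P, p.1 ≠ p.2) (hne : P.Nonempty) {δ ε : ℝ} {L : ℕ} (hδ : 0 < δ) (hδ1 : δ ≤ 1)
    (hε : 0 < ε) (hε1 : ε ≤ 1)
    (hL : (8 / δ) * Real.log ((Fintype.card V : ℝ) ^ 2 / (2 * ε)) ≤ L) :
    (P.card : ℝ) * (1 - δ) ^ L ≤ ε := by
  obtain ⟨p, hp⟩ := hne
  have hn : (2 : ℝ) ≤ Fintype.card V := by
    exact_mod_cast Fintype.one_lt_card_iff.mpr ⟨p.1, p.2, hP p hp⟩
  have hcard : (P.card : ℝ) ≤ (Fintype.card V : ℝ) ^ 2 := by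
    exact_mod_cast P.card_le_univ.trans_eq (by simp [sq])
  calc (P.card : ℝ) * (1 - δ) ^ L ≤ (Fintype.card V : ℝ) ^ 2 * (1 - δ) ^ L := by gcongr
    _ ≤ ε := sq_mul_one_sub_pow_le hn hδ hδ1 hε hε1 hL

theorem stmt14_general (q L : ℕ) (H : Fin q → Fin q → Prop)
    (i j : Fin q) (hij : ¬ H i j)
    (V : Type) [Fintype V] (G : SimpleGraph V)
    (hcol : ∃ σ, IsHColoring H G σ)
    (δ ε : ℝ) (hδ : 0 < δ) (hε : 0 < ε) (hε1 : ε < 1)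
    (hpair : ∀ u v : V, u ≠ v → ¬ G.Adj u v →
      ({σ : V → Fin q | IsHColoring H G σ ∧ σ u = i ∧ σ v = j}.ncard : ℝ) ≥
        δ * ({σ : V → Fin q | IsHColoring H G σ}.ncard : ℝ))
    (hL : (L : ℝ) ≥ (8 / δ) * Real.log ((Fintype.card V : ℝ) ^ 2 / (2 * ε))) :
    ({x : Fin L → (V → Fin q) |
        (∀ k, IsHColoring H G (x k)) ∧ learnedGraph i j x = G}.ncard : ℝ) ≥
      (1 - ε) * ({σ : V → Fin q | IsHColoring H G σ}.ncard : ℝ) ^ L := by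
  classical
  set S : Set (V → Fin q) := {σ | IsHColoring H G σ}
  set N : ℕ := S.ncard
  set P : Finset (V × V) := {p | p.1 ≠ p.2 ∧ ¬ G.Adj p.1 p.2}
  set B : V × V → Set (V → Fin q) := fun p => {σ | σ p.1 = i ∧ σ p.2 = j}
  have hN : (0 : ℝ) < N := by exact_mod_cast (Set.ncard_pos S.toFinite).mpr hcol
  have hmiss : ∀ p ∈ P, ((S \ B p).ncard : ℝ) ≤ (1 - δ) * N := fun p hp =>
    have hp' := (Finset.mem_filter.mp hp).2
    Set.ncard_sdiff_le_of_mul_le_ncard_inter (hpair p.1 p.2 hp'.1 hp'.2)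
  have htail : (P.card : ℝ) * (1 - δ) ^ L ≤ ε := by
    rcases P.eq_empty_or_nonempty with hP | ⟨p, hp⟩
    · simp [hP, hε.le]
    have hδ1 : δ ≤ 1 := by
      nlinarith [hmiss p hp, (Set.ncard (S \ B p)).cast_nonneg (α := ℝ)]
    exact Finset.card_mul_one_sub_pow_le (fun p hp => (Finset.mem_filter.mp hp).2.1) ⟨p, hp⟩
      hδ hδ1 hε hε1.le hL
  have hgood : {x : Fin L → (V → Fin q) | (∀ k, x k ∈ S) ∧ ∀ p ∈ P, ∃ k, x k ∈ B p} ⊆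
      {x | (∀ k, IsHColoring H G (x k)) ∧ learnedGraph i j x = G} := by
    rintro x ⟨hx, hhit⟩
    refine ⟨hx, learnedGraph_eq_of_forall_exists hij hx fun u v huv hnadj => ?_⟩
    exact hhit (u, v) (Finset.mem_filter.mpr ⟨Finset.mem_univ _, huv, hnadj⟩)
  calc (1 - ε) * (N : ℝ) ^ L ≤ N ^ L - P.card * ((1 - δ) * N) ^ L := by
        rw [mul_pow]; nlinarith [pow_pos hN L]
    _ = N ^ L - ∑ p ∈ P, ((1 - δ) * N) ^ L := by rw [Finset.sum_const, nsmul_eq_mul]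
    _ ≤ N ^ L - ∑ p ∈ P, ((S \ B p).ncard : ℝ) ^ L := by
        gcongr with p hp; exact hmiss p hp
    _ ≤ _ := Set.ncard_pow_sub_sum_le_ncard_forall_exists S P B L
    _ ≤ _ := by exact_mod_cast Set.ncard_le_ncard hgood

/-- Correctness of `structlearn-H`: if every nonadjacent pair receives the incompatible
pair `(i,j)` with probability at least `δ` under a uniform `H`-coloring, and
`L ≥ (8/δ) log(n²/(2ε))`, then the fraction of sample sequences (of `L` i.i.d. uniform
`H`-colorings of `G`) on which the algorithm outputs exactly `G` is at least `1 - ε`. -/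
theorem stmt14 (q L : ℕ) (H : Fin q → Fin q → Prop) (hsymm : Symmetric H)
    (i j : Fin q) (hij : ¬ H i j)
    (V : Type) [Fintype V] [DecidableEq V] (G : SimpleGraph V)
    (hcol : ∃ σ, IsHColoring H G σ)
    (δ ε : ℝ) (hδ : 0 < δ) (hε : 0 < ε) (hε1 : ε < 1)
    (hpair : ∀ u v : V, u ≠ v → ¬ G.Adj u v →
      ({σ : V → Fin q | IsHColoring H G σ ∧ σ u = i ∧ σ v = j}.ncard : ℝ) ≥
        δ * ({σ : V → Fin q | IsHColoring H G σ}.ncard : ℝ))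
    (hL : (L : ℝ) ≥ (8 / δ) * Real.log ((Fintype.card V : ℝ) ^ 2 / (2 * ε))) :
    ({x : Fin L → (V → Fin q) |
        (∀ k, IsHColoring H G (x k)) ∧ learnedGraph i j x = G}.ncard : ℝ) ≥
      (1 - ε) * ({σ : V → Fin q | IsHColoring H G σ}.ncard : ℝ) ^ L :=
  stmt14_general q L H i j hij V G hcol δ ε hδ hε hε1 hpair hL
end
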